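/- (Performance gap from classification error.) Let M be a finite-horizon MDP with horizon T, let π* be a (deterministic) optimal policy, and let π be a policy whose expected 0-1 disagreement with π* under its own discounted state visitation distribution is E_{s ~ ρ_π}[ 1(π(s) ≠ π*(s)) ] = ε. Suppose that for all actions a and all t ∈ {1, ..., T}, the one-step deviation loss satisfies Q^{π*}_{T−t+1}(s, π*) − Q^{π*}_{T−t+1}(s, a) ≤ u. Then η(π, M) ≥ η(π*, M) − u T ε. -/
import Mathlib


/-
STATEMENT 8 (performance gap from classification error, Ross & Bagnell Thm 2.2):
Let M be a finite-horizon MDP with horizon T, π* a deterministic optimal policy, and π a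
policy with expected 0-1 disagreement ε = E_{s ~ ρ_π}[ 1(π(s) ≠ π*(s)) ] under its own
state visitation distribution.  If Q^{π*}_{T−t+1}(s, π*) − Q^{π*}_{T−t+1}(s, a) ≤ u for
all s, a and t ∈ {1, ..., T}, then η(π, M) ≥ η(π*, M) − u T ε.
-/

noncomputable section

/-- `stateDistDet P μ π i s` is `P(s_i = s | π)` for a deterministic policy `π`. -/
def stateDistDet {S A : Type*} [Fintype S]
    (P : S → A → S → ℝ) (μ : S → ℝ) (π : S → A) : ℕ → S → ℝ
  | 0 => μ
  | i + 1 => fun s' => ∑ s, stateDistDet P μ π i s * P s (π s) s'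

/-- `QT P r π' t s a` is `Q^{π'}_t(s, a)`: the expected `t`-step cumulative reward of
taking action `a` in state `s` and then following policy `π'` for the remaining steps. -/
def QT {S A : Type*} [Fintype S]
    (P : S → A → S → ℝ) (r : S → A → ℝ) (π' : S → A) : ℕ → S → A → ℝ
  | 0 => fun _ _ => 0
  | t + 1 => fun s a => r s a + ∑ s', P s a s' * QT P r π' t s' (π' s')

/-- `η(π, M)`: the expected cumulative reward of the deterministic policy `π` over the
finite horizon `T`. -/
def etaFin {S A : Type*} [Fintype S]
    (P : S → A → S → ℝ) (r : S → A → ℝ) (μ : S → ℝ) (T : ℕ) (π : S → A) : ℝ :=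
  ∑ i ∈ Finset.range T, ∑ s, stateDistDet P μ π i s * r s (π s)

section Aux

variable {S A : Type*} [Fintype S] (P : S → A → S → ℝ) (r : S → A → ℝ)

lemma stateDistDet_nonneg (hP : ∀ s a s', 0 ≤ P s a s')
    (μ : S → ℝ) (hμ : ∀ s, 0 ≤ μ s) (π : S → A) : ∀ i s, 0 ≤ stateDistDet P μ π i s := by
  intro i
  induction i with
  | zero => exact hμ
  | succ i ih =>
    intro s'
    exact Finset.sum_nonneg fun s _ => mul_nonneg (ih s) (hP s (π s) s')

lemma stateDistDet_shift (μ : S → ℝ) (π : S → A) :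
    ∀ i, stateDistDet P μ π (i + 1)
      = stateDistDet P (fun s' => ∑ s, μ s * P s (π s) s') π i := by
  intro i
  induction i with
  | zero => rfl
  | succ i ih =>
    funext s'
    show (∑ s, stateDistDet P μ π (i+1) s * P s (π s) s') = _
    rw [ih]; rfl

lemma swap_lemma (π πstar : S → A) (n : ℕ) (μ : S → ℝ) :
    ∑ s, μ s * QT P r πstar (n+1) s (π s)
      = (∑ s, μ s * r s (π s))
        + ∑ s', (∑ s, μ s * P s (π s) s') * QT P r πstar n s' (πstar s') := by
  simp only [QT]
  simp only [mul_add, Finset.sum_add_distrib, Finset.mul_sum, Finset.sum_mul]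
  congr 1
  rw [Finset.sum_comm]
  exact Finset.sum_congr rfl fun s' _ => Finset.sum_congr rfl fun s _ => by ring

lemma eta_eq_Q (π : S → A) : ∀ (n : ℕ) (μ : S → ℝ),
    (∑ i ∈ Finset.range n, ∑ s, stateDistDet P μ π i s * r s (π s))
      = ∑ s, μ s * QT P r π n s (π s) := by
  intro n
  induction n with
  | zero => simp [QT]
  | succ n ih =>
    intro μ
    rw [Finset.sum_range_succ']
    have h1 : ∀ i ∈ Finset.range n,
        (∑ s, stateDistDet P μ π (i+1) s * r s (π s))
          = ∑ s, stateDistDet P (fun s' => ∑ t, μ t * P t (π t) s') π i s * r s (π s) := by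
      intro i _; rw [stateDistDet_shift]
    rw [Finset.sum_congr rfl h1, ih, swap_lemma P r π π n μ]
    show _ + ∑ s, μ s * r s (π s) = _
    ring

lemma key_identity (π πstar : S → A) : ∀ (n : ℕ) (μ : S → ℝ),
    (∑ s, μ s * QT P r πstar n s (πstar s))
      - ∑ i ∈ Finset.range n, ∑ s, stateDistDet P μ π i s * r s (π s)
    = ∑ i ∈ Finset.range n, ∑ s, stateDistDet P μ π i s *
        (QT P r πstar (n - i) s (πstar s) - QT P r πstar (n - i) s (π s)) := by
  intro n
  induction n with
  | zero => simp [QT]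
  | succ n ih =>
    intro μ
    set μ' : S → ℝ := fun s' => ∑ t, μ t * P t (π t) s' with hμ'
    have hshift : ∀ i, stateDistDet P μ π (i + 1) = stateDistDet P μ' π i :=
      stateDistDet_shift P μ π
    rw [Finset.sum_range_succ' (fun i => ∑ s, stateDistDet P μ π i s * r s (π s)) n,
        Finset.sum_range_succ' (fun i => ∑ s, stateDistDet P μ π i s *
          (QT P r πstar (n + 1 - i) s (πstar s) - QT P r πstar (n + 1 - i) s (π s))) n]
    have h1 : ∀ i ∈ Finset.range n,
        (∑ s, stateDistDet P μ π (i+1) s * r s (π s))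
          = ∑ s, stateDistDet P μ' π i s * r s (π s) := by
      intro i _; rw [hshift]
    have h2 : ∀ i ∈ Finset.range n,
        (∑ s, stateDistDet P μ π (i+1) s *
          (QT P r πstar (n + 1 - (i+1)) s (πstar s) - QT P r πstar (n + 1 - (i+1)) s (π s)))
          = ∑ s, stateDistDet P μ' π i s *
          (QT P r πstar (n - i) s (πstar s) - QT P r πstar (n - i) s (π s)) := by
      intro i _
      rw [hshift]
      have : n + 1 - (i + 1) = n - i := by omega
      rw [this]
    rw [Finset.sum_congr rfl h1, Finset.sum_congr rfl h2]
    have hst : ∑ s, μ s * QT P r πstar (n+1) s (π s)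
        = (∑ s, μ s * r s (π s)) + ∑ s', μ' s' * QT P r πstar n s' (πstar s') :=
      swap_lemma P r π πstar n μ
    have hih := ih μ'
    show ∑ s, μ s * QT P r πstar (n+1) s (πstar s)
        - ((∑ i ∈ Finset.range n, ∑ s, stateDistDet P μ' π i s * r s (π s))
          + ∑ s, stateDistDet P μ π 0 s * r s (π s))
      = (∑ i ∈ Finset.range n, ∑ s, stateDistDet P μ' π i s *
          (QT P r πstar (n - i) s (πstar s) - QT P r πstar (n - i) s (π s)))
        + ∑ s, stateDistDet P μ π 0 s *
          (QT P r πstar (n + 1 - 0) s (πstar s) - QT P r πstar (n + 1 - 0) s (π s))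
    have h0 : (stateDistDet P μ π 0 : S → ℝ) = μ := rfl
    simp only [h0, Nat.sub_zero]
    have hsub : ∑ s, μ s * (QT P r πstar (n+1) s (πstar s) - QT P r πstar (n+1) s (π s))
        = (∑ s, μ s * QT P r πstar (n+1) s (πstar s))
          - ∑ s, μ s * QT P r πstar (n+1) s (π s) := by
      rw [← Finset.sum_sub_distrib]
      exact Finset.sum_congr rfl fun s _ => by ring
    rw [hsub, hst]
    linarith [hih]

end Aux

theorem performance_gap_from_classification_error
    {S A : Type*} [Fintype S] [Fintype A] [DecidableEq A]
    -- probabilistic state dynamics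
    (P : S → A → S → ℝ) (hP : ∀ s a, (∀ s', 0 ≤ P s a s') ∧ ∑ s', P s a s' = 1)
    -- reward function
    (r : S → A → ℝ)
    -- initial state distribution
    (μ : S → ℝ) (hμ : (∀ s, 0 ≤ μ s) ∧ ∑ s, μ s = 1)
    -- time horizon
    (T : ℕ) (hT : 0 < T)
    -- the learned policy π and a deterministic optimal policy π*
    (π πstar : S → A)
    -- ε = E_{s ~ ρ_π}[ 1(π(s) ≠ π*(s)) ]: the expected 0-1 loss of π against π* under
    -- the (normalized) state visitation distribution ρ_π of π itself
    (ε : ℝ)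
    (hε : ε = (1 / (T : ℝ)) * ∑ i ∈ Finset.range T, ∑ s,
      stateDistDet P μ π i s * (if π s ≠ πstar s then (1 : ℝ) else 0))
    -- one-step deviations from π* cost at most u:
    -- Q^{π*}_{T−t+1}(s, π*) − Q^{π*}_{T−t+1}(s, a) ≤ u for all s, a and t ∈ {1, …, T}
    (u : ℝ)
    (hu : ∀ (s : S) (a : A) (t : ℕ), 1 ≤ t → t ≤ T →
      QT P r πstar t s (πstar s) - QT P r πstar t s a ≤ u) :
    etaFin P r μ T π ≥ etaFin P r μ T πstar - u * T * ε := by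
  have hPnn : ∀ s a s', 0 ≤ P s a s' := fun s a => (hP s a).1
  have hdnn := stateDistDet_nonneg P hPnn μ hμ.1 π
  have hstar : etaFin P r μ T πstar = ∑ s, μ s * QT P r πstar T s (πstar s) :=
    eta_eq_Q P r πstar T μ
  have hkey := key_identity P r π πstar T μ
  have hbound : ∑ i ∈ Finset.range T, ∑ s, stateDistDet P μ π i s *
        (QT P r πstar (T - i) s (πstar s) - QT P r πstar (T - i) s (π s))
      ≤ ∑ i ∈ Finset.range T, ∑ s, stateDistDet P μ π i s *
        (u * (if π s ≠ πstar s then (1 : ℝ) else 0)) := by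
    refine Finset.sum_le_sum fun i hi => Finset.sum_le_sum fun s _ => ?_
    have hiT : i < T := Finset.mem_range.mp hi
    by_cases h : π s = πstar s
    · simp [h]
    · have h1 : QT P r πstar (T - i) s (πstar s) - QT P r πstar (T - i) s (π s) ≤ u :=
        hu s (π s) (T - i) (by omega) (by omega)
      have h2 : (u * (if π s ≠ πstar s then (1 : ℝ) else 0)) = u := by simp [h]
      rw [h2]
      exact mul_le_mul_of_nonneg_left h1 (hdnn i s)
  have hsum : ∑ i ∈ Finset.range T, ∑ s, stateDistDet P μ π i s *
        (u * (if π s ≠ πstar s then (1 : ℝ) else 0))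
      = u * ∑ i ∈ Finset.range T, ∑ s,
        stateDistDet P μ π i s * (if π s ≠ πstar s then (1 : ℝ) else 0) := by
    rw [Finset.mul_sum]
    refine Finset.sum_congr rfl fun i _ => ?_
    rw [Finset.mul_sum]
    exact Finset.sum_congr rfl fun s _ => by ring
  have hTne : (T : ℝ) ≠ 0 := by positivity
  have hε' : (T : ℝ) * ε = ∑ i ∈ Finset.range T, ∑ s,
      stateDistDet P μ π i s * (if π s ≠ πstar s then (1 : ℝ) else 0) := by
    rw [hε]; field_simp
  have : etaFin P r μ T πstar - etaFin P r μ T π ≤ u * ((T : ℝ) * ε) := by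
    rw [hstar]
    calc (∑ s, μ s * QT P r πstar T s (πstar s)) - etaFin P r μ T π
        = ∑ i ∈ Finset.range T, ∑ s, stateDistDet P μ π i s *
            (QT P r πstar (T - i) s (πstar s) - QT P r πstar (T - i) s (π s)) := hkey
      _ ≤ _ := hbound
      _ = u * ((T : ℝ) * ε) := by rw [hsum, hε']
  have := this
  nlinarith [this]
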